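/- arXiv:2604.20729 — 6 statements merged into one kernel-verified Lean document; each statement's English description precedes it below -/
import Mathlib

section
/- For integers 2 ≤ d_1 ≤ d_2 ≤ ... ≤ d_n with d_j - 1 dividing d_{j+1} - 1 for all j, define m_j (for 2 ≤ j ≤ n) as the least positive integer m with m(d_j - 1) > Σ_{i=1}^{j-1}(d_i - 1), and set m_1 = 1. Then for each j with 1 ≤ j ≤ n-1, one has m_{j+1}(d_{j+1} - 1) + 1 + Σ_{i=j+2}^{n}(d_i - 1) ≤ m_j(d_j - 1) + 1 + Σ_{i=j+1}^{n}(d_i - 1). -/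
open Finset

theorem stmt_0 (n : ℕ) (d m : ℕ → ℕ)
    (hd2 : ∀ j, 1 ≤ j → j ≤ n → 2 ≤ d j)
    (hmono : ∀ j, 1 ≤ j → j < n → d j ≤ d (j + 1))
    (hdvd : ∀ j, 1 ≤ j → j < n → (d j - 1) ∣ (d (j + 1) - 1))
    (hm1 : m 1 = 1)
    (hm : ∀ j, 2 ≤ j → j ≤ n →
      IsLeast {k : ℕ | 0 < k ∧ (∑ i ∈ Icc 1 (j - 1), (d i - 1)) < k * (d j - 1)} (m j))
    (j : ℕ) (hj1 : 1 ≤ j) (hjn : j ≤ n - 1) :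
    m (j + 1) * (d (j + 1) - 1) + 1 + ∑ i ∈ Icc (j + 2) n, (d i - 1) ≤
      m j * (d j - 1) + 1 + ∑ i ∈ Icc (j + 1) n, (d i - 1) := by
  have hn2 : 2 ≤ n := by omega
  have hjn' : j + 1 ≤ n := by omega
  have hjltn : j < n := by omega
  obtain ⟨e, he⟩ : ∃ e, d j - 1 = e := ⟨_, rfl⟩
  obtain ⟨D, hD⟩ : ∃ D, d (j + 1) - 1 = D := ⟨_, rfl⟩
  rw [he, hD]
  have he1 : 1 ≤ e := by
    have := hd2 j hj1 (by omega); omega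
  have hD1 : 1 ≤ D := by
    have := hd2 (j + 1) (by omega) hjn'; omega
  have heD : e ∣ D := by rw [← he, ← hD]; exact hdvd j hj1 hjltn
  have heleD : e ≤ D := Nat.le_of_dvd (by omega) heD
  -- S_{j-1} < m j * e
  have hSj : (∑ i ∈ Icc 1 (j - 1), (d i - 1)) < m j * e := by
    rcases Nat.lt_or_ge j 2 with h | h
    · interval_cases j
      simp only [Nat.sub_self, Finset.Icc_eq_empty_of_lt (by norm_num : (1:ℕ) > 0),
        Finset.sum_empty, hm1, one_mul]
      omega
    · have := (hm j h (by omega)).1.2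
      rwa [he] at this
  obtain ⟨q, hq⟩ : ∃ q, m j * e / D = q := ⟨_, rfl⟩
  have hmodle : m j * e % D ≤ D - e := by
    have h1 : e ∣ m j * e % D := (Nat.dvd_mod_iff heD).mpr (dvd_mul_left e (m j))
    have h2 : m j * e % D < D := Nat.mod_lt _ (by omega)
    have h3 : e ∣ D - m j * e % D := Nat.dvd_sub heD h1
    have h4 : 0 < D - m j * e % D := by omega
    have := Nat.le_of_dvd h4 h3
    omega
  have hdm := Nat.div_add_mod (m j * e) D
  rw [hq] at hdm
  have hcomm : D * q = q * D := Nat.mul_comm _ _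
  have hqle : m j * e ≤ q * D + (D - e) := by omega
  have hqge : q * D ≤ m j * e := by omega
  have hsum : (∑ i ∈ Icc 1 j, (d i - 1)) =
      (∑ i ∈ Icc 1 (j - 1), (d i - 1)) + e := by
    obtain ⟨p, rfl⟩ : ∃ p, j = p + 1 := ⟨j - 1, by omega⟩
    rw [Finset.sum_Icc_succ_top (by omega : 1 ≤ p + 1)]
    simp [he]
  have hkmem : 0 < q + 1 ∧ (∑ i ∈ Icc 1 j, (d i - 1)) < (q + 1) * D := by
    refine ⟨by omega, ?_⟩
    rw [hsum, add_mul, one_mul]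
    omega
  have hle : m (j + 1) ≤ q + 1 := by
    have hmj1 := hm (j + 1) (by omega) hjn'
    have hidx : (j + 1) - 1 = j := by omega
    rw [hidx, hD] at hmj1
    exact hmj1.2 hkmem
  have hkey : m (j + 1) * D ≤ m j * e + D := by
    calc m (j + 1) * D ≤ (q + 1) * D := Nat.mul_le_mul_right _ hle
      _ = q * D + D := by rw [add_mul, one_mul]
      _ ≤ m j * e + D := by omega
  have hsplit : (∑ i ∈ Icc (j + 1) n, (d i - 1)) =
      D + ∑ i ∈ Icc (j + 2) n, (d i - 1) := by
    have hins : Icc (j + 1) n = insert (j + 1) (Icc (j + 2) n) := by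
      ext x
      simp only [Finset.mem_Icc, Finset.mem_insert]
      omega
    rw [hins, Finset.sum_insert (by simp), hD]
  rw [hsplit]
  omega
end

section
/- For integers 2 ≤ d_1 ≤ ... ≤ d_n with d_j - 1 dividing d_{j+1} - 1 for all j, and with m_j defined as the least positive integer m with m(d_j - 1) > Σ_{i=1}^{j-1}(d_i - 1) (and m_1 = 1), the minimum of the set { m_j(d_j - 1) + 1 + Σ_{i=j+1}^{n}(d_i - 1) : j = 1, ..., n } ∪ { 1 + Σ_{i=1}^{n}(d_i - 1) } equals m_n(d_n - 1) + 1. -/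
/-!
Write `e i = d i - 1` and `S j = e 1 + ⋯ + e (j - 1)`, so that
`(m j - 1) * e j ≤ S j < m j * e j`. Since `e j ∣ e (j + 1)`, the number
`(m (j + 1) - 1) * e (j + 1) ≤ S j + e j < (m j + 1) * e j` is a multiple of `e j`, hence at most
`m j * e j`; that is, `m (j + 1) * e (j + 1) ≤ m j * e j + e (j + 1)`. Telescoping gives
`m n * e n ≤ m j * e j + e (j + 1) + ⋯ + e n` for every `j`, and for `j = 1` the right-hand side
is `e 1 + ⋯ + e n`.
-/

open Finset

theorem pred_mul_le_of_isLeast {s e m : ℕ} (h : IsLeast {k : ℕ | 0 < k ∧ s < k * e} m) :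
    (m - 1) * e ≤ s := by
  by_contra! hlt
  have hpos : 0 < m - 1 := Nat.pos_of_ne_zero fun h0 => by simp [h0] at hlt
  have := h.2 ⟨hpos, hlt⟩
  omega

theorem mul_le_mul_add_of_dvd {e e' s m m' : ℕ} (hdvd : e ∣ e') (hs : s < m * e)
    (hm' : (m' - 1) * e' ≤ s + e) : m' * e' ≤ m * e + e' := by
  have hmul : (m' - 1) * e' ≤ m * e := by
    obtain ⟨k, hk⟩ := dvd_mul_of_dvd_right hdvd (m' - 1)
    rw [hk] at hm' ⊢
    have : e * k < e * (m + 1) := by rw [mul_add, mul_one, mul_comm e m]; omega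
    rw [mul_comm m e]
    exact Nat.mul_le_mul_left e (Nat.lt_succ_iff.mp (Nat.lt_of_mul_lt_mul_left this))
  have : m' * e' ≤ (m' - 1) * e' + e' := by
    rw [← add_one_mul]
    exact Nat.mul_le_mul_right e' (by omega)
  omega

theorem le_add_sum_Ioc_of_le_add {a e : ℕ → ℕ} {j k : ℕ} (hjk : j ≤ k)
    (hstep : ∀ i, j ≤ i → i < k → a (i + 1) ≤ a i + e (i + 1)) :
    a k ≤ a j + ∑ i ∈ Ioc j k, e i := by
  induction k, hjk using Nat.le_induction with
  | base => simp
  | succ k hjk ih =>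
    rw [sum_Ioc_succ_top hjk]
    have := ih fun i hi hik => hstep i hi (by omega)
    have := hstep k hjk (by omega)
    omega

theorem stmt_1_general (n : ℕ) (d m : ℕ → ℕ) (hn : 1 ≤ n)
    (hd2 : ∀ j, 1 ≤ j → j ≤ n → 2 ≤ d j)
    (hdvd : ∀ j, 1 ≤ j → j < n → (d j - 1) ∣ (d (j + 1) - 1))
    (hm1 : m 1 = 1)
    (hm : ∀ j, 2 ≤ j → j ≤ n →
      IsLeast {k : ℕ | 0 < k ∧ (∑ i ∈ Icc 1 (j - 1), (d i - 1)) < k * (d j - 1)} (m j)) :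
    (insert (1 + ∑ i ∈ Icc 1 n, (d i - 1))
        ((Icc 1 n).image (fun j => m j * (d j - 1) + 1 + ∑ i ∈ Icc (j + 1) n, (d i - 1)))).min'
      (Finset.insert_nonempty _ _) = m n * (d n - 1) + 1 := by
  have hlt : ∀ j, 1 ≤ j → j ≤ n →
      ∑ i ∈ Icc 1 (j - 1), (d i - 1) < m j * (d j - 1) := by
    intro j hj hjn
    obtain rfl | hj := hj.eq_or_lt
    · have := hd2 1 le_rfl hjn
      simp only [Nat.sub_self, Icc_eq_empty_of_lt zero_lt_one, sum_empty, hm1, one_mul]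
      omega
    · exact (hm j hj hjn).1.2
  have hstep : ∀ j, 1 ≤ j → j < n →
      m (j + 1) * (d (j + 1) - 1) ≤ m j * (d j - 1) + (d (j + 1) - 1) := by
    intro j hj hjn
    refine mul_le_mul_add_of_dvd (hdvd j hj hjn) (hlt j hj hjn.le) ?_
    have := pred_mul_le_of_isLeast (hm (j + 1) (by omega) hjn)
    rwa [Nat.add_sub_cancel, ← Nat.sub_add_cancel hj, sum_Icc_succ_top (by omega),
      Nat.sub_add_cancel hj] at this
  have htele : ∀ j ∈ Icc 1 n,
      m n * (d n - 1) ≤ m j * (d j - 1) + ∑ i ∈ Icc (j + 1) n, (d i - 1) := by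
    intro j hj
    rw [Icc_add_one_left_eq_Ioc]
    exact le_add_sum_Ioc_of_le_add (a := fun i => m i * (d i - 1)) (e := fun i => d i - 1)
      (mem_Icc.mp hj).2 fun i hi hin => hstep i ((mem_Icc.mp hj).1.trans hi) hin
  have htotal : m n * (d n - 1) ≤ ∑ i ∈ Icc 1 n, (d i - 1) := by
    rw [Icc_eq_cons_Ioc hn, sum_cons, ← Icc_add_one_left_eq_Ioc]
    simpa [hm1] using htele 1 (by simpa using hn)
  refine le_antisymm
    (min'_le _ _ (mem_insert_of_mem (mem_image.mpr ⟨n, by simpa using hn, by simp⟩)))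
    (le_min' _ _ _ ?_)
  simp only [mem_insert, mem_image, forall_eq_or_imp, forall_exists_index, and_imp]
  exact ⟨by omega, fun y j hj hy => by have := htele j hj; omega⟩

theorem stmt_1 (n : ℕ) (d m : ℕ → ℕ) (hn : 1 ≤ n)
    (hd2 : ∀ j, 1 ≤ j → j ≤ n → 2 ≤ d j)
    (hmono : ∀ j, 1 ≤ j → j < n → d j ≤ d (j + 1))
    (hdvd : ∀ j, 1 ≤ j → j < n → (d j - 1) ∣ (d (j + 1) - 1))
    (hm1 : m 1 = 1)
    (hm : ∀ j, 2 ≤ j → j ≤ n →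
      IsLeast {k : ℕ | 0 < k ∧ (∑ i ∈ Icc 1 (j - 1), (d i - 1)) < k * (d j - 1)} (m j)) :
    (insert (1 + ∑ i ∈ Icc 1 n, (d i - 1))
        ((Icc 1 n).image (fun j => m j * (d j - 1) + 1 + ∑ i ∈ Icc (j + 1) n, (d i - 1)))).min'
      (Finset.insert_nonempty _ _) = m n * (d n - 1) + 1 :=
  stmt_1_general n d m hn hd2 hdvd hm1 hm
end

section
/- Let d_0 ≤ d_1 ≤ ... ≤ d_n be integers with d_i ≥ 2, and fix j ∈ {0, ..., n}. If γ_0, ..., γ_n are nonnegative integers with γ_i ≤ d_i - 1 for all i and Σ_{i=0}^{n} γ_i ≤ Σ_{i≠j}(d_i - 1), then Π_{i=0}^{n}(d_i - γ_i) ≥ d_j. -/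
open Finset

lemma aux_prod_ge (s : Finset ℕ) (f : ℕ → ℕ) (hf : ∀ i ∈ s, 1 ≤ f i) :
    1 + ∑ i ∈ s, (f i - 1) ≤ ∏ i ∈ s, f i := by
  induction s using Finset.induction_on with
  | empty => simp
  | @insert a s ha ih =>
    rw [Finset.sum_insert ha, Finset.prod_insert ha]
    have h1 : 1 ≤ f a := hf a (Finset.mem_insert_self a s)
    have h2 : 1 + ∑ i ∈ s, (f i - 1) ≤ ∏ i ∈ s, f i :=
      ih fun i hi => hf i (Finset.mem_insert_of_mem hi)
    calc 1 + ((f a - 1) + ∑ i ∈ s, (f i - 1))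
        = f a + ∑ i ∈ s, (f i - 1) := by omega
      _ ≤ f a * (1 + ∑ i ∈ s, (f i - 1)) := by
          rw [Nat.mul_add, Nat.mul_one]
          exact Nat.add_le_add_left (Nat.le_mul_of_pos_left _ h1) _
      _ ≤ f a * ∏ i ∈ s, f i := Nat.mul_le_mul_left _ h2

theorem stmt_5 (n : ℕ) (d γ : ℕ → ℕ)
    (hd2 : ∀ i, i ≤ n → 2 ≤ d i)
    (hmono : ∀ i, i < n → d i ≤ d (i + 1))
    (j : ℕ) (hj : j ≤ n)
    (hγ : ∀ i, i ≤ n → γ i ≤ d i - 1)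
    (hsum : ∑ i ∈ range (n + 1), γ i ≤ ∑ i ∈ (range (n + 1)).erase j, (d i - 1)) :
    d j ≤ ∏ i ∈ range (n + 1), (d i - γ i) := by
  have hjmem : j ∈ range (n + 1) := mem_range.2 (Nat.lt_succ_of_le hj)
  have hmem : ∀ i ∈ (range (n + 1)).erase j, i ≤ n := fun i hi =>
    Nat.lt_succ_iff.1 (mem_range.1 (mem_of_mem_erase hi))
  -- sum over erase of (d i - γ i - 1) ≥ γ j
  have hsplit : ∑ i ∈ range (n + 1), γ i = γ j + ∑ i ∈ (range (n+1)).erase j, γ i :=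
    (Finset.add_sum_erase _ γ hjmem).symm
  have hkey : γ j ≤ ∑ i ∈ (range (n+1)).erase j, (d i - γ i - 1) := by
    have h1 : ∑ i ∈ (range (n+1)).erase j, (d i - γ i - 1) + ∑ i ∈ (range (n+1)).erase j, γ i
        = ∑ i ∈ (range (n+1)).erase j, (d i - 1) := by
      rw [← Finset.sum_add_distrib]
      refine Finset.sum_congr rfl fun i hi => ?_
      have := hγ i (hmem i hi)
      have := hd2 i (hmem i hi)
      omega
    omega
  have hprod : 1 + ∑ i ∈ (range (n+1)).erase j, (d i - γ i - 1)
      ≤ ∏ i ∈ (range (n+1)).erase j, (d i - γ i) :=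
    aux_prod_ge _ _ fun i hi => by
      have := hγ i (hmem i hi); have := hd2 i (hmem i hi); omega
  have hfull : ∏ i ∈ range (n+1), (d i - γ i)
      = (d j - γ j) * ∏ i ∈ (range (n+1)).erase j, (d i - γ i) :=
    (Finset.mul_prod_erase _ _ hjmem).symm
  rw [hfull]
  have hγj := hγ j hj
  have hdj := hd2 j hj
  calc d j ≤ (d j - γ j) * (1 + γ j) := by
        have hb : 1 ≤ d j - γ j := by omega
        calc d j = (d j - γ j) + γ j := by omega
          _ ≤ (d j - γ j) + (d j - γ j) * γ j :=
              Nat.add_le_add_left (Nat.le_mul_of_pos_left _ hb) _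
          _ = (d j - γ j) * (1 + γ j) := by ring
    _ ≤ (d j - γ j) * (1 + ∑ i ∈ (range (n+1)).erase j, (d i - γ i - 1)) := by
        exact Nat.mul_le_mul_left _ (by omega)
    _ ≤ (d j - γ j) * ∏ i ∈ (range (n+1)).erase j, (d i - γ i) :=
        Nat.mul_le_mul_left _ hprod
end

section
/- Let K be a finite field and X = [K_0 × ... × K_n] ⊂ P^n a projective nested Cartesian set with |K_i| = d_i, K_i ⊆ K. Then the number of points of X equals 1 + Σ_{i=1}^{n} d_i d_{i+1} ⋯ d_n. -/
open Finset
open scoped LinearAlgebra.Projectivization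

/-!
Every point of `X` has exactly one representative whose first nonzero coordinate, say at
position `k`, equals `1`; rescaling a representative stays inside `X` because `K_k ⊆ K_i`
for `i ≥ k`. The representatives with leading `1` at `k` are the vectors
`(0, …, 0, 1, a_{k+1}, …, a_n)` with `a_j ∈ K_j`, so there are `d_{k+1} ⋯ d_n` of them,
and the term `k = n` contributes the `1`.
-/

theorem Set.ncard_univ_pi {α : Type*} [Fintype α] {β : α → Type*} (s : ∀ a, Set (β a)) :
    (Set.pi Set.univ s).ncard = ∏ a, (s a).ncard := by
  simp only [← Nat.card_coe_set_eq, Nat.card_congr (Equiv.Set.univPi s), Nat.card_pi]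

section LeadingOne

variable {ι K : Type*} [LinearOrder ι] [Field K]

def IsLeadingOneAt (v : ι → K) (k : ι) : Prop :=
  v k = 1 ∧ ∀ j < k, v j = 0

namespace IsLeadingOneAt

variable {v w : ι → K} {k l : ι}

theorem ne_zero (hv : IsLeadingOneAt v k) : v ≠ 0 := by
  rintro rfl
  exact zero_ne_one hv.1

theorem unique (hk : IsLeadingOneAt v k) (hl : IsLeadingOneAt v l) : k = l := by
  rcases lt_trichotomy k l with hkl | rfl | hlk
  · exact absurd hk.1 (by simp [hl.2 k hkl])
  · rfl
  · exact absurd hl.1 (by simp [hk.2 l hlk])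

theorem eq_of_smul_eq (hv : IsLeadingOneAt v k) (hw : IsLeadingOneAt w l) {a : K}
    (h : a • w = v) : v = w := by
  have hva : ∀ j, v j = a * w j := fun j => by simp [← h]
  suffices a = 1 by rw [← h, this, one_smul]
  rcases lt_trichotomy k l with hkl | rfl | hlk
  · simpa [hw.2 k hkl, hv.1] using hva k
  · simpa [hv.1, hw.1] using (hva k).symm
  · have ha : a = 0 := by simpa [hv.2 l hlk, hw.1] using (hva l).symm
    simpa [ha, hv.1] using hva k

end IsLeadingOneAt

theorem exists_isLeadingOneAt_inv_smul [Finite ι] {v : ι → K} (hv : v ≠ 0) :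
    ∃ k, v k ≠ 0 ∧ IsLeadingOneAt ((v k)⁻¹ • v) k := by
  obtain ⟨j, hj⟩ := Function.ne_iff.mp hv
  obtain ⟨k, hk, hmin⟩ := wellFounded_lt.has_min {j | v j ≠ 0} ⟨j, hj⟩
  refine ⟨k, hk, by simp [inv_mul_cancel₀ hk], fun j hj => ?_⟩
  have : v j = 0 := not_not.mp fun hne => hmin j hne hj
  simp [this]

theorem ncard_setOf_mk_eq_ncard_iUnion_isLeadingOneAt [Finite ι] (A : ι → Subfield K)
    (hA : Monotone A) :
    Set.ncard {p : ℙ K (ι → K) |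
        ∃ (v : ι → K) (hv : v ≠ 0),
          (∀ i, v i ∈ A i) ∧ p = Projectivization.mk K v hv} =
      (⋃ k, {v : ι → K | (∀ i, v i ∈ (A i : Set K)) ∧ IsLeadingOneAt v k}).ncard := by
  symm
  refine Set.ncard_congr (fun v hv => Projectivization.mk K v ?_) ?_ ?_ ?_
  · obtain ⟨k, -, hk⟩ := Set.mem_iUnion.mp hv
    exact hk.ne_zero
  · intro v hv
    obtain ⟨k, hvA, -⟩ := Set.mem_iUnion.mp hv
    exact ⟨v, _, hvA, rfl⟩
  · intro v w hv hw hvw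
    obtain ⟨k, -, hk⟩ := Set.mem_iUnion.mp hv
    obtain ⟨l, -, hl⟩ := Set.mem_iUnion.mp hw
    obtain ⟨a, ha⟩ := (Projectivization.mk_eq_mk_iff' K _ _ _ _).mp hvw
    exact hk.eq_of_smul_eq hl ha
  · rintro _ ⟨v, hv, hvA, rfl⟩
    obtain ⟨k, hvk, hk⟩ := exists_isLeadingOneAt_inv_smul hv
    have hmem : ∀ i, ((v k)⁻¹ • v) i ∈ A i := fun i => by
      rcases lt_or_ge i k with hik | hki
      · simp only [hk.2 i hik, zero_mem]
      · exact mul_mem (inv_mem (hA hki (hvA k))) (hvA i)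
    exact ⟨_, Set.mem_iUnion.mpr ⟨k, hmem, hk⟩,
      (Projectivization.mk_eq_mk_iff' K _ _ _ _).mpr ⟨(v k)⁻¹, rfl⟩⟩

theorem setOf_isLeadingOneAt_eq_pi {A : ι → Set K} {k : ι} (h0 : ∀ j < k, 0 ∈ A j)
    (h1 : 1 ∈ A k) :
    {v : ι → K | (∀ i, v i ∈ A i) ∧ IsLeadingOneAt v k} =
      Set.pi Set.univ fun j => if k < j then A j else if j = k then {1} else {0} := by
  ext v
  simp only [Set.mem_ofPred_eq, Set.mem_pi, Set.mem_univ, true_implies, IsLeadingOneAt]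
  constructor
  · rintro ⟨hvA, hk, hlt⟩ j
    rcases lt_trichotomy j k with hjk | rfl | hkj
    · simp [hjk.not_gt, hjk.ne, hlt j hjk]
    · simp [hk]
    · simp [hkj, hvA j]
  · intro hv
    have hk : v k = 1 := by simpa using hv k
    have hlt : ∀ j < k, v j = 0 := fun j hjk => by simpa [hjk.not_gt, hjk.ne] using hv j
    refine ⟨fun j => ?_, hk, hlt⟩
    rcases lt_trichotomy j k with hjk | rfl | hkj
    · simpa [hlt j hjk] using h0 j hjk
    · simpa [hk] using h1
    · simpa [hkj] using hv j

theorem ncard_iUnion_isLeadingOneAt [Fintype ι] [Finite K] {A : ι → Set K}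
    (h0 : ∀ j, 0 ∈ A j) (h1 : ∀ j, 1 ∈ A j) :
    (⋃ k, {v : ι → K | (∀ i, v i ∈ A i) ∧ IsLeadingOneAt v k}).ncard =
      ∑ k, ∏ j with k < j, (A j).ncard := by
  rw [Set.ncard_iUnion_of_finite (fun _ => Set.toFinite _), finsum_eq_sum_of_fintype]
  · refine sum_congr rfl fun k _ => ?_
    rw [setOf_isLeadingOneAt_eq_pi (fun j _ => h0 j) (h1 k), Set.ncard_univ_pi,
      prod_filter]
    refine prod_congr rfl fun j _ => ?_
    split_ifs <;> simp
  · intro k l hkl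
    exact Set.disjoint_left.mpr fun v hk hl => hkl (hk.2.unique hl.2)

end LeadingOne

theorem Fin.sum_prod_filter_lt_eq_one_add_sum_prod_Icc (n : ℕ) (d : ℕ → ℕ) :
    ∑ k : Fin (n + 1), ∏ j with k < j, d j = 1 + ∑ i ∈ Icc 1 n, ∏ j ∈ Icc i n, d j := by
  have hIoi (k : Fin (n + 1)) : ∏ j with k < j, d j = ∏ j ∈ Ioc (k : ℕ) n, d j := by
    rw [filter_lt_eq_Ioi, ← Ioo_add_one_right_eq_Ioc, ← Fin.map_valEmbedding_Ioi, prod_map]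
    rfl
  simp_rw [hIoi]
  rw [Fin.sum_univ_eq_sum_range (fun k => ∏ j ∈ Ioc k n, d j), sum_range_succ, Ioc_self,
    prod_empty, add_comm, ← Ico_add_one_right_eq_Icc, sum_Ico_eq_sum_range]
  simp [add_comm 1, Icc_add_one_left_eq_Ioc]

theorem stmt_10 (K : Type*) [Field K] [Fintype K] (n : ℕ)
    (A : Fin (n + 1) → Subfield K)
    (hnested : ∀ i j : Fin (n + 1), i ≤ j → A i ≤ A j)
    (d : ℕ → ℕ) (hd : ∀ i : Fin (n + 1), Nat.card (A i) = d (i : ℕ)) :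
    Set.ncard {p : ℙ K (Fin (n + 1) → K) |
        ∃ (v : Fin (n + 1) → K) (hv : v ≠ 0),
          (∀ i, v i ∈ A i) ∧ p = Projectivization.mk K v hv} =
      1 + ∑ i ∈ Icc 1 n, ∏ j ∈ Icc i n, d j := by
  have hcard (j : Fin (n + 1)) : (A j : Set K).ncard = d j := by
    rw [← Nat.card_coe_set_eq, ← hd j]
    rfl
  rw [ncard_setOf_mk_eq_ncard_iUnion_isLeadingOneAt A fun i j => hnested i j,
    ncard_iUnion_isLeadingOneAt (A := fun j => (A j : Set K)) (fun j => zero_mem (A j))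
      (fun j => one_mem (A j))]
  simp only [hcard, Fin.sum_prod_filter_lt_eq_one_add_sum_prod_Icc]
end

section
/- Let K be a field, let K_0 ⊆ ... ⊆ K_n ⊆ K be finite subfields with |K_i| = d_i, let X = [K_0 × ... × K_n] ⊆ P^n(K), and let P = (a_0 : ... : a_n) ∈ X with a_0 ≠ 0, normalized so a_0 = 1. Then the polynomial f = t_0 · Π_{i=1}^{n} Π_{λ ∈ K_i \ {a_i}} (t_i - λ t_0) is homogeneous of degree 1 + Σ_{i=1}^{n}(d_i - 1), satisfies f(P) ≠ 0, and f(Q) = 0 for every Q ∈ X with Q ≠ P. -/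
/-!
At a point `b` with `b 0 ≠ 0`, the factor `t_i - λ t_0` vanishes exactly when `b i / b 0 = λ`.
Nestedness puts `b i / b 0` in `K_i`, so unless `b i / b 0 = a i` for every `i` (that is, unless
`b` is proportional to `a`) some factor vanishes; when `b 0 = 0` the factor `t_0` does.
Each of the `d_i - 1` factors contributed by `K_i` is a linear form, which gives the degree.
-/

open Finset MvPolynomial
open scoped LinearAlgebra.Projectivization

namespace MvPolynomial

theorem isHomogeneous_X_sub_C_mul_X {σ R : Type*} [CommRing R] (i j : σ) (l : R) :
    (X i - C l * X j : MvPolynomial σ R).IsHomogeneous 1 :=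
  (isHomogeneous_X R i).sub (by simpa using (isHomogeneous_C σ l).mul (isHomogeneous_X R j))

section IndicatorPoly

variable {R : Type*} [CommRing R] [DecidableEq R] {n : ℕ}
  (S : Fin (n + 1) → Finset R) (a : Fin (n + 1) → R)

noncomputable def indicatorPoly : MvPolynomial (Fin (n + 1)) R :=
  X 0 * ∏ i ∈ Ioi 0, ∏ l ∈ (S i).erase (a i), (X i - C l * X 0)

theorem isHomogeneous_indicatorPoly :
    (indicatorPoly S a).IsHomogeneous (1 + ∑ i ∈ Ioi 0, #((S i).erase (a i))) := by
  refine (isHomogeneous_X R 0).mul (IsHomogeneous.prod _ _ _ fun i _ => ?_)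
  simpa using IsHomogeneous.prod _ _ (fun _ => 1) fun l _ => isHomogeneous_X_sub_C_mul_X i 0 l

theorem eval_indicatorPoly (b : Fin (n + 1) → R) :
    eval b (indicatorPoly S a) = b 0 * ∏ i ∈ Ioi 0, ∏ l ∈ (S i).erase (a i), (b i - l * b 0) := by
  simp [indicatorPoly]

theorem eval_indicatorPoly_self_ne_zero [IsDomain R] (ha0 : a 0 = 1) :
    eval a (indicatorPoly S a) ≠ 0 := by
  rw [eval_indicatorPoly, ha0, one_mul]
  exact prod_ne_zero_iff.2 fun i _ => prod_ne_zero_iff.2 fun l hl =>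
    by simpa [sub_eq_zero, eq_comm] using (mem_erase.1 hl).1

end IndicatorPoly

theorem eq_smul_of_eval_indicatorPoly_ne_zero {K : Type*} [Field K] [DecidableEq K] {n : ℕ}
    (S : Fin (n + 1) → Finset K) (a b : Fin (n + 1) → K) (ha0 : a 0 = 1)
    (hbS : ∀ i, b i / b 0 ∈ S i) (hb : eval b (indicatorPoly S a) ≠ 0) : b = b 0 • a := by
  rw [eval_indicatorPoly] at hb
  obtain ⟨hb0, hprod⟩ := mul_ne_zero_iff.1 hb
  funext i
  rcases eq_or_ne i 0 with rfl | hi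
  · simp [ha0]
  have hratio : b i / b 0 = a i := by
    by_contra hne
    have hfactors := prod_ne_zero_iff.1 hprod i (mem_Ioi.2 (Fin.pos_iff_ne_zero.2 hi))
    have hfactor := prod_ne_zero_iff.1 hfactors (b i / b 0) (mem_erase.2 ⟨hne, hbS i⟩)
    exact hfactor (by rw [div_mul_cancel₀ _ hb0, sub_self])
  rw [Pi.smul_apply, smul_eq_mul, ← hratio, mul_div_cancel₀ _ hb0]

end MvPolynomial

theorem stmt_11 (K : Type*) [Field K] [DecidableEq K] (n : ℕ)
    (A : Fin (n + 1) → Subfield K)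
    (hnested : ∀ i j : Fin (n + 1), i ≤ j → A i ≤ A j)
    (hfin : ∀ i, (A i : Set K).Finite)
    (d : Fin (n + 1) → ℕ) (hd : ∀ i, Nat.card (A i) = d i)
    (a : Fin (n + 1) → K) (ha0 : a 0 = 1) (haA : ∀ i, a i ∈ A i)
    (hane : a ≠ 0) :
    (X 0 * ∏ i ∈ Ioi (0 : Fin (n + 1)), ∏ l ∈ (hfin i).toFinset.erase (a i),
        (X i - C l * X 0) : MvPolynomial (Fin (n + 1)) K).IsHomogeneous
      (1 + ∑ i ∈ Ioi (0 : Fin (n + 1)), (d i - 1)) ∧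
    eval a (X 0 * ∏ i ∈ Ioi (0 : Fin (n + 1)), ∏ l ∈ (hfin i).toFinset.erase (a i),
        (X i - C l * X 0) : MvPolynomial (Fin (n + 1)) K) ≠ 0 ∧
    ∀ (b : Fin (n + 1) → K) (hb : b ≠ 0), (∀ i, b i ∈ A i) →
      Projectivization.mk K b hb ≠ Projectivization.mk K a hane →
      eval b (X 0 * ∏ i ∈ Ioi (0 : Fin (n + 1)), ∏ l ∈ (hfin i).toFinset.erase (a i),
        (X i - C l * X 0) : MvPolynomial (Fin (n + 1)) K) = 0 := by
  set S : Fin (n + 1) → Finset K := fun i => (hfin i).toFinset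
  change (indicatorPoly S a).IsHomogeneous _ ∧ eval a (indicatorPoly S a) ≠ 0 ∧
    ∀ b hb, _ → _ → eval b (indicatorPoly S a) = 0
  have hcard (i) : #((S i).erase (a i)) = d i - 1 := by
    rw [card_erase_of_mem (by simpa [S] using haA i), ← hd i,
      ← Nat.card_eq_card_finite_toFinset (hfin i)]
    rfl
  refine ⟨by simpa only [hcard] using isHomogeneous_indicatorPoly S a,
    eval_indicatorPoly_self_ne_zero S a ha0, fun b hb hbA hne => ?_⟩
  by_contra hval
  have hbS (i) : b i / b 0 ∈ S i := by
    simpa [S] using div_mem (hbA i) (hnested 0 i (Fin.zero_le i) (hbA 0))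
  exact hne ((Projectivization.mk_eq_mk_iff' K b a hb hane).2
    ⟨b 0, (eq_smul_of_eval_indicatorPoly_ne_zero S a b ha0 hbS hval).symm⟩)
end

section
/- Let K be a field, K_0 ⊆ ... ⊆ K_n finite subfields of K with |K_i| = d_i ≥ 2 and d_0 ≤ ... ≤ d_n, let X = [K_0 × ... × K_n] ⊆ P^n(K), and let P = (a_0 : ... : a_n) ∈ X with j the least index such that a_j ≠ 0. If g is a homogeneous polynomial of degree d with 1 ≤ d ≤ Σ_{i ≠ j}(d_i - 1) that vanishes at every point of X \ {P}, then g(P) = 0. -/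
/-!
Footprint bound: if `h` vanishes at every point of a grid `∏ i, S i` except `a`, then
`∑ i, (#(S i) - 1) ≤ totalDegree h`. Otherwise `h a • L - L a • h`, with `L` the unnormalised
Lagrange polynomial of `a`, vanishes on the whole grid while its coefficient at the top
monomial of `L` is `h a ≠ 0`, against the Combinatorial Nullstellensatz.

If `g a ≠ 0`, then `g * ∏ s ∈ S j \ {0, a j}, (X j - s)` vanishes on the grid except at `a`:
homogeneity kills `0`, `g` kills the points off the line through `a`, and the second factor
kills the other multiples `μ • a`, whose `j`-th coordinate lies in `S j \ {0, a j}`. Its degree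
is at most `d + #(S j) - 2`, so the footprint bound forces `∑ i ≠ j, (#(S i) - 1) < d`.
-/

open Finset MvPolynomial
open scoped LinearAlgebra.Projectivization

namespace MvPolynomial

variable {R σ : Type*} [CommRing R]

lemma eval_prod_X_sub_C_eq_zero_iff [IsDomain R] (i : σ) (T : Finset R) (x : σ → R) :
    eval x (∏ s ∈ T, (X i - C s)) = 0 ↔ x i ∈ T := by
  simp [map_prod, prod_eq_zero_iff, sub_eq_zero]

lemma totalDegree_prod_X_sub_C_le [Nontrivial R] (i : σ) (T : Finset R) :
    (∏ s ∈ T, (X i - C s)).totalDegree ≤ #T := by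
  refine (totalDegree_finsetProd _ _).trans ?_
  rw [card_eq_sum_ones]
  refine sum_le_sum fun s _ => (totalDegree_sub_C_le _ _).trans ?_
  rw [totalDegree_X]

variable [Fintype σ]

section GridLagrange

variable [DecidableEq R]

noncomputable def gridLagrange (S : σ → Finset R) (a : σ → R) : MvPolynomial σ R :=
  ∏ i, ∏ s ∈ (S i).erase (a i), (X i - C s)

variable (S : σ → Finset R) {a : σ → R}

lemma eval_gridLagrange_eq_zero_iff [IsDomain R] {x : σ → R} :
    eval x (gridLagrange S a) = 0 ↔ ∃ i, x i ≠ a i ∧ x i ∈ S i := by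
  rw [gridLagrange, map_prod, prod_eq_zero_iff]
  simp only [mem_univ, true_and, eval_prod_X_sub_C_eq_zero_iff, mem_erase]

lemma totalDegree_gridLagrange_le [Nontrivial R] :
    (gridLagrange S a).totalDegree ≤ ∑ i, #((S i).erase (a i)) :=
  (totalDegree_finsetProd _ _).trans (sum_le_sum fun i _ => totalDegree_prod_X_sub_C_le i _)

open MonomialOrder in
lemma coeff_gridLagrange [Nontrivial R] :
    (gridLagrange S a).coeff (∑ i, Finsupp.single i #((S i).erase (a i))) = 1 := by
  let _ : LinearOrder σ := WellOrderingRel.isWellOrder.linearOrder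
  have hfactor (i : σ) : lex.Monic (∏ s ∈ (S i).erase (a i), (X i - C s)) :=
    .prod fun s _ => lex.monic_X_sub_C i s
  have hdeg : lex.degree (gridLagrange S a) = ∑ i, Finsupp.single i #((S i).erase (a i)) := by
    rw [gridLagrange, degree_prod_of_regular fun i _ =>
      (hfactor i).leadingCoeff_eq_one ▸ isRegular_one]
    refine sum_congr rfl fun i _ => ?_
    rw [degree_prod_of_regular fun s _ =>
      (lex.monic_X_sub_C i s).leadingCoeff_eq_one ▸ isRegular_one]
    simp [degree_X_sub_C]
  rw [← hdeg]
  exact Monic.prod fun i _ => hfactor i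

end GridLagrange

theorem sum_card_sub_one_le_totalDegree [IsDomain R] (S : σ → Finset R) {a : σ → R}
    (ha : ∀ i, a i ∈ S i) {h : MvPolynomial σ R}
    (hvanish : ∀ x, (∀ i, x i ∈ S i) → x ≠ a → eval x h = 0)
    (hha : eval a h ≠ 0) :
    ∑ i, (#(S i) - 1) ≤ h.totalDegree := by
  classical
  simp_rw [← card_erase_of_mem (ha _)]
  by_contra! hlt
  set t : σ →₀ ℕ := ∑ i, Finsupp.single i #((S i).erase (a i))
  have ht_degree : t.degree = ∑ i, #((S i).erase (a i)) := by
    simp [t, Finsupp.degree_eq_sum]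
  have hcoeff : (gridLagrange S a).coeff t = 1 := coeff_gridLagrange S
  set F := eval a h • gridLagrange S a - eval a (gridLagrange S a) • h
  have hF_vanish : ∀ x, (∀ i, x i ∈ S i) → eval x F = 0 := by
    intro x hx
    rcases eq_or_ne x a with rfl | hxa
    · simp only [F, map_sub, smul_eval]; ring
    · obtain ⟨i, hi⟩ := Function.ne_iff.mp hxa
      have hfx : eval x (gridLagrange S a) = 0 :=
        (eval_gridLagrange_eq_zero_iff S).mpr ⟨i, hi, hx i⟩
      simp [F, hvanish x hx hxa, hfx]
  have hF_coeff : F.coeff t = eval a h := by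
    simp [F, hcoeff, coeff_eq_zero_of_totalDegree_lt (ht_degree ▸ hlt)]
  have hF_degree : F.totalDegree = t.degree := by
    refine le_antisymm ?_ ?_
    · refine (totalDegree_sub _ _).trans (max_le ?_ ?_)
      · exact (totalDegree_smul_le _ _).trans (ht_degree ▸ totalDegree_gridLagrange_le S)
      · exact (totalDegree_smul_le _ _).trans (ht_degree ▸ hlt.le)
    · exact le_totalDegree (mem_support_iff.mpr (hF_coeff ▸ hha))
  obtain ⟨x, hx, hFx⟩ := combinatorial_nullstellensatz_exists_eval_nonzero F t
    (hF_coeff ▸ hha) hF_degree S fun i => by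
      simp [t, Finsupp.finsetSum_apply, Finsupp.single_apply, card_erase_lt_of_mem (ha i)]
  exact hFx (hF_vanish x hx)

theorem IsHomogeneous.eval_eq_zero_of_forall_mk_ne {K : Type*} [Field K] [DecidableEq σ]
    {S : σ → Finset K} {a : σ → K} (ha0 : a ≠ 0) (haS : ∀ i, a i ∈ S i) {j : σ} (hj : a j ≠ 0)
    (hS0 : 0 ∈ S j) {g : MvPolynomial σ K} {n : ℕ} (hg : g.IsHomogeneous n) (hn : 1 ≤ n)
    (hnS : n ≤ ∑ i ∈ univ.erase j, (#(S i) - 1))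
    (hvanish : ∀ (b : σ → K) (hb : b ≠ 0), (∀ i, b i ∈ S i) →
      Projectivization.mk K b hb ≠ Projectivization.mk K a ha0 → eval b g = 0) :
    eval a g = 0 := by
  classical
  by_contra hga
  set T := ((S j).erase 0).erase (a j)
  have hT : #T + 2 = #(S j) := by
    rw [card_erase_of_mem (mem_erase.mpr ⟨hj, haS j⟩), card_erase_of_mem hS0]
    have := one_lt_card.mpr ⟨0, hS0, a j, haS j, hj.symm⟩
    omega
  have hvanish' :
      ∀ b, (∀ i, b i ∈ S i) → b ≠ a → eval b (g * ∏ s ∈ T, (X j - C s)) = 0 := by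
    intro b hbS hba
    rw [map_mul, mul_eq_zero, eval_prod_X_sub_C_eq_zero_iff]
    rcases eq_or_ne b 0 with rfl | hb0
    · left
      rw [eval_zero, constantCoeff_eq]
      exact hg.coeff_eq_zero (by rw [map_zero]; omega)
    by_cases hba' : Projectivization.mk K b hb0 = Projectivization.mk K a ha0
    · obtain ⟨μ, rfl⟩ := (Projectivization.mk_eq_mk_iff' K b a hb0 ha0).mp hba'
      have hμ0 : μ ≠ 0 := by rintro rfl; simp at hb0
      have hμ1 : μ ≠ 1 := by rintro rfl; simp at hba
      right
      simpa [T, hj, hμ0, hμ1] using hbS j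
    · exact .inl (hvanish b hb0 hbS hba')
  have haT : eval a (∏ s ∈ T, (X j - C s)) ≠ 0 := by
    rw [Ne, eval_prod_X_sub_C_eq_zero_iff]
    simp [T]
  have hbound := sum_card_sub_one_le_totalDegree S haS hvanish'
    (by rw [map_mul]; exact mul_ne_zero hga haT)
  have hdeg := (totalDegree_mul _ _).trans
    (add_le_add hg.totalDegree_le (totalDegree_prod_X_sub_C_le j T))
  rw [← add_sum_erase _ _ (mem_univ j)] at hbound
  omega

end MvPolynomial

theorem stmt_15_general (K : Type*) [Field K] (n : ℕ)
    (A : Fin (n + 1) → Subfield K)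
    (hfin : ∀ i, (A i : Set K).Finite)
    (d : Fin (n + 1) → ℕ) (hd : ∀ i, Nat.card (A i) = d i)
    (a : Fin (n + 1) → K) (hane : a ≠ 0) (haA : ∀ i, a i ∈ A i)
    (j : Fin (n + 1)) (hj : a j ≠ 0)
    (g : MvPolynomial (Fin (n + 1)) K) (dd : ℕ) (hg : g.IsHomogeneous dd)
    (hdd1 : 1 ≤ dd) (hdd2 : dd ≤ ∑ i ∈ Finset.univ.erase j, (d i - 1))
    (hvanish : ∀ (b : Fin (n + 1) → K) (hb : b ≠ 0), (∀ i, b i ∈ A i) →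
      Projectivization.mk K b hb ≠ Projectivization.mk K a hane → eval b g = 0) :
    eval a g = 0 := by
  set S : Fin (n + 1) → Finset K := fun i => (hfin i).toFinset
  have hmem (i : Fin (n + 1)) (x : K) : x ∈ S i ↔ x ∈ A i := Set.Finite.mem_toFinset _
  have hcard (i : Fin (n + 1)) : #(S i) = d i :=
    (Set.ncard_eq_toFinset_card _ (hfin i)).symm.trans (hd i)
  exact hg.eval_eq_zero_of_forall_mk_ne hane (fun i => (hmem i _).mpr (haA i)) hj
    ((hmem j 0).mpr (A j).zero_mem) hdd1 (by simpa only [hcard] using hdd2)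
    fun b hb hbS => hvanish b hb fun i => (hmem i _).mp (hbS i)

theorem stmt_15 (K : Type*) [Field K] (n : ℕ)
    (A : Fin (n + 1) → Subfield K)
    (hnested : ∀ i j : Fin (n + 1), i ≤ j → A i ≤ A j)
    (hfin : ∀ i, (A i : Set K).Finite)
    (d : Fin (n + 1) → ℕ) (hd : ∀ i, Nat.card (A i) = d i)
    (hd2 : ∀ i, 2 ≤ d i)
    (a : Fin (n + 1) → K) (hane : a ≠ 0) (haA : ∀ i, a i ∈ A i)
    (j : Fin (n + 1)) (hj : a j ≠ 0) (hjleast : ∀ i : Fin (n + 1), i < j → a i = 0)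
    (g : MvPolynomial (Fin (n + 1)) K) (dd : ℕ) (hg : g.IsHomogeneous dd)
    (hdd1 : 1 ≤ dd) (hdd2 : dd ≤ ∑ i ∈ Finset.univ.erase j, (d i - 1))
    (hvanish : ∀ (b : Fin (n + 1) → K) (hb : b ≠ 0), (∀ i, b i ∈ A i) →
      Projectivization.mk K b hb ≠ Projectivization.mk K a hane → eval b g = 0) :
    eval a g = 0 :=
  stmt_15_general K n A hfin d hd a hane haA j hj g dd hg hdd1 hdd2 hvanish
end
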